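/- For x ∈ Z[ω], gde(x, √2) = gde(|x|², 2). -/

import Mathlib

noncomputable section

open Complex

/-- The eighth root of unity ω = e^{iπ/4}. -/
def omg : ℂ := Complex.exp (Real.pi * Complex.I / 4)

/-- √2 as a complex number. -/
def rt2 : ℂ := (Real.sqrt 2 : ℝ)

/-- Membership in the ring Z[ω] = {a + bω + cω² + dω³ : a,b,c,d ∈ ℤ}. -/
def Zomega (z : ℂ) : Prop :=
  ∃ a b c d : ℤ, z = a + b * omg + c * omg ^ 2 + d * omg ^ 3

/-- Membership in the ring Z[1/√2, i] = {u/(√2)^n : u ∈ Z[ω], n ∈ ℕ}. -/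
def ZRoot2i (z : ℂ) : Prop :=
  ∃ u : ℂ, Zomega u ∧ ∃ n : ℕ, z = u / rt2 ^ n

/-- `b` divides `z` within the ring Z[ω]. -/
def ZDvd (b z : ℂ) : Prop := ∃ q : ℂ, Zomega q ∧ z = b * q

/-- `k` is the greatest dividing exponent of base `b` with respect to `z`:
`b^k` divides `z` in Z[ω], while `b^(k+1)` does not. -/
def IsGde (b z : ℂ) (k : ℕ) : Prop := ZDvd (b ^ k) z ∧ ¬ ZDvd (b ^ (k + 1)) z

/-- `k` is the smallest denominator exponent of base √2 with respect to `z`: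
the smallest integer `k` such that `z·(√2)^k ∈ Z[ω]`. -/
def IsSde (z : ℂ) (k : ℤ) : Prop :=
  Zomega (z * rt2 ^ k) ∧ ∀ j : ℤ, Zomega (z * rt2 ^ j) → k ≤ j

/-! Write x = a + bω + cω² + dω³. Since ω − ω³ = √2, one gets x x̄ = S + T√2 with
S = a² + b² + c² + d² and T = ab + bc + cd − da, and as 1, ω, ω², ω³ are linearly
independent over ℤ, 2 ∣ x x̄ in Z[ω] means that S and T are even. Modulo 2 this forces
a ≡ c and b ≡ d, which is exactly the condition for √2 ∣ x. Since dividing x by √2 divides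
x x̄ by 2, induction gives √2^k ∣ x ↔ 2^k ∣ x x̄ for every k, and the theorem follows. -/

open ComplexConjugate

lemma rt2_sq : rt2 ^ 2 = 2 := by
  rw [rt2, ← ofReal_pow, Real.sq_sqrt zero_le_two, ofReal_ofNat]

lemma conj_rt2 : conj rt2 = rt2 := conj_ofReal _

lemma rt2_pow_mul_conj (k : ℕ) : rt2 ^ k * conj (rt2 ^ k) = 2 ^ k := by
  rw [map_pow, conj_rt2, ← mul_pow, ← sq, rt2_sq]

lemma omg_eq : omg = rt2 / 2 * (1 + I) := by
  have h : (Real.pi * I / 4 : ℂ) = (Real.pi / 4 : ℝ) * I := by push_cast; ring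
  rw [omg, h, exp_mul_I, ← ofReal_cos, ← ofReal_sin, Real.cos_pi_div_four,
    Real.sin_pi_div_four, rt2]
  push_cast; ring

lemma omg_sq : omg ^ 2 = I := by
  rw [omg_eq]
  linear_combination ((1 + I) ^ 2 / 4) * rt2_sq + (1 / 2 : ℂ) * I_sq

lemma omg_pow_four : omg ^ 4 = -1 := by
  rw [show omg ^ 4 = (omg ^ 2) ^ 2 by ring, omg_sq, I_sq]

lemma rt2_eq_omg_sub : rt2 = omg - omg ^ 3 := by
  rw [pow_succ, omg_sq, omg_eq]
  linear_combination (rt2 / 2) * I_sq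

lemma conj_omg : conj omg = -omg ^ 3 := by
  rw [pow_succ, omg_sq, omg_eq, map_mul, map_add, map_one, conj_I, map_div₀, conj_rt2,
    map_ofNat]
  linear_combination (rt2 / 2) * I_sq

lemma rt2_mul_omg : rt2 * omg = 1 + I := by
  rw [omg_eq]
  linear_combination (1 + I) / 2 * rt2_sq

lemma int_eq_zero_of_add_mul_sqrt_two_eq_zero {m n : ℤ} (h : (m : ℝ) + n * √2 = 0) :
    m = 0 ∧ n = 0 := by
  have hn : n = 0 := by
    by_contra hn
    exact ((irrational_sqrt_two.intCast_mul hn).intCast_add m).ne_zero h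
  subst hn
  exact ⟨by simpa using h, rfl⟩

namespace Zomega

def ofCoeffs (a b c d : ℤ) : ℂ := a + b * omg + c * omg ^ 2 + d * omg ^ 3

lemma ofCoeffs_mem (a b c d : ℤ) : Zomega (ofCoeffs a b c d) := ⟨a, b, c, d, rfl⟩

lemma exists_eq_ofCoeffs {x : ℂ} (hx : Zomega x) : ∃ a b c d, x = ofCoeffs a b c d := hx

lemma ofCoeffs_mul_ofCoeffs (a b c d a' b' c' d' : ℤ) :
    ofCoeffs a b c d * ofCoeffs a' b' c' d' =
      ofCoeffs (a * a' - b * d' - c * c' - d * b') (a * b' + b * a' - c * d' - d * c')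
        (a * c' + b * b' + c * a' - d * d') (a * d' + b * c' + c * b' + d * a') := by
  simp only [ofCoeffs]
  push_cast
  linear_combination
    (b * d' + c * c' + d * b' + (c * d' + d * c') * omg + d * d' * omg ^ 2 : ℂ) * omg_pow_four

lemma conj_ofCoeffs (a b c d : ℤ) : conj (ofCoeffs a b c d) = ofCoeffs a (-d) (-c) (-b) := by
  simp only [ofCoeffs, map_add, map_mul, map_pow, conj_omg, map_intCast]
  push_cast
  linear_combination (c * omg ^ 2 - d * omg * (omg ^ 4 - 1) : ℂ) * omg_pow_four

lemma mul_conj_ofCoeffs (a b c d : ℤ) :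
    ofCoeffs a b c d * conj (ofCoeffs a b c d) =
      ofCoeffs (a ^ 2 + b ^ 2 + c ^ 2 + d ^ 2) (a * b + b * c + c * d - d * a) 0
        (-(a * b + b * c + c * d - d * a)) := by
  rw [conj_ofCoeffs, ofCoeffs_mul_ofCoeffs]
  congr 1 <;> ring

lemma rt2_mul_ofCoeffs (a b c d : ℤ) :
    rt2 * ofCoeffs a b c d = ofCoeffs (b - d) (a + c) (b + d) (c - a) := by
  simp only [ofCoeffs]
  rw [rt2_eq_omg_sub]
  push_cast
  linear_combination (d - b - c * omg - d * omg ^ 2 : ℂ) * omg_pow_four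

lemma two_mul_ofCoeffs (a b c d : ℤ) :
    2 * ofCoeffs a b c d = ofCoeffs (2 * a) (2 * b) (2 * c) (2 * d) := by
  simp only [ofCoeffs]; push_cast; ring

lemma ofCoeffs_sub_ofCoeffs (a b c d a' b' c' d' : ℤ) :
    ofCoeffs a b c d - ofCoeffs a' b' c' d' = ofCoeffs (a - a') (b - b') (c - c') (d - d') := by
  simp only [ofCoeffs]; push_cast; ring

lemma rt2_mul_ofCoeffs_eq_re_add_im (a b c d : ℤ) :
    rt2 * ofCoeffs a b c d = ((b - d : ℤ) + a * √2 : ℝ) + ((b + d : ℤ) + c * √2 : ℝ) * I := by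
  have hω3 : omg ^ 3 = I * omg := by rw [pow_succ, omg_sq]
  simp only [ofCoeffs, hω3, omg_sq]
  push_cast
  rw [show ((√2 : ℝ) : ℂ) = rt2 from rfl]
  linear_combination (b + d * I : ℂ) * rt2_mul_omg + (d : ℂ) * I_sq

lemma ofCoeffs_eq_zero {a b c d : ℤ} (h : ofCoeffs a b c d = 0) :
    a = 0 ∧ b = 0 ∧ c = 0 ∧ d = 0 := by
  have h' := congrArg (rt2 * ·) h
  simp only [rt2_mul_ofCoeffs_eq_re_add_im, mul_zero] at h'
  have hre := int_eq_zero_of_add_mul_sqrt_two_eq_zero (m := b - d) (n := a) (by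
    simpa using congrArg re h')
  have him := int_eq_zero_of_add_mul_sqrt_two_eq_zero (m := b + d) (n := c) (by
    simpa using congrArg im h')
  omega

lemma ofCoeffs_inj {a b c d a' b' c' d' : ℤ} :
    ofCoeffs a b c d = ofCoeffs a' b' c' d' ↔ a = a' ∧ b = b' ∧ c = c' ∧ d = d' := by
  refine ⟨fun h => ?_, by rintro ⟨rfl, rfl, rfl, rfl⟩; rfl⟩
  have := ofCoeffs_eq_zero (a := a - a') (b := b - b') (c := c - c') (d := d - d')
    (by rw [← ofCoeffs_sub_ofCoeffs, h, sub_self])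
  omega

lemma mul {x y : ℂ} (hx : Zomega x) (hy : Zomega y) : Zomega (x * y) := by
  obtain ⟨a, b, c, d, rfl⟩ := hx.exists_eq_ofCoeffs
  obtain ⟨a', b', c', d', rfl⟩ := hy.exists_eq_ofCoeffs
  rw [ofCoeffs_mul_ofCoeffs]
  exact ofCoeffs_mem _ _ _ _

lemma map_conj {x : ℂ} (hx : Zomega x) : Zomega (conj x) := by
  obtain ⟨a, b, c, d, rfl⟩ := hx.exists_eq_ofCoeffs
  rw [conj_ofCoeffs]
  exact ofCoeffs_mem _ _ _ _

lemma two_pow (k : ℕ) : Zomega (2 ^ k) := ⟨2 ^ k, 0, 0, 0, by push_cast; ring⟩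

end Zomega

open Zomega

lemma two_dvd_add_of_two_dvd_norm_coeffs {a b c d : ℤ} (hS : 2 ∣ a ^ 2 + b ^ 2 + c ^ 2 + d ^ 2)
    (hT : 2 ∣ a * b + b * c + c * d - d * a) : 2 ∣ a + c ∧ 2 ∣ b + d := by
  have key : ∀ α β γ δ : ZMod 2, α ^ 2 + β ^ 2 + γ ^ 2 + δ ^ 2 = 0 →
      α * β + β * γ + γ * δ - δ * α = 0 → α + γ = 0 ∧ β + δ = 0 := by decide
  have h2 : ∀ n : ℤ, 2 ∣ n ↔ (n : ZMod 2) = 0 := fun n => by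
    rw [ZMod.intCast_zmod_eq_zero_iff_dvd]; norm_num
  simp only [h2, Int.cast_add, Int.cast_mul, Int.cast_pow, Int.cast_sub] at hS hT ⊢
  exact key _ _ _ _ hS hT

lemma ZDvd.mul_conj {b x : ℂ} (h : ZDvd b x) : ZDvd (b * conj b) (x * conj x) := by
  obtain ⟨q, hq, rfl⟩ := h
  exact ⟨q * conj q, hq.mul hq.map_conj, by rw [map_mul]; ring⟩

lemma zdvd_rt2_of_zdvd_two_mul_conj {x : ℂ} (hx : Zomega x) (h : ZDvd 2 (x * conj x)) :
    ZDvd rt2 x := by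
  obtain ⟨a, b, c, d, rfl⟩ := hx.exists_eq_ofCoeffs
  obtain ⟨w, hw, hxw⟩ := h
  obtain ⟨p, q, r, s, rfl⟩ := hw.exists_eq_ofCoeffs
  rw [mul_conj_ofCoeffs, two_mul_ofCoeffs, ofCoeffs_inj] at hxw
  obtain ⟨⟨u, hu⟩, ⟨v, hv⟩⟩ := two_dvd_add_of_two_dvd_norm_coeffs ⟨p, hxw.1⟩ ⟨q, hxw.2.1⟩
  refine ⟨ofCoeffs (v - d) u v (u - a), ofCoeffs_mem _ _ _ _, ?_⟩
  rw [rt2_mul_ofCoeffs]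
  congr 1 <;> omega

lemma zdvd_rt2_pow_iff {x : ℂ} (hx : Zomega x) (k : ℕ) :
    ZDvd (rt2 ^ k) x ↔ ZDvd (2 ^ k) (x * conj x) := by
  induction k generalizing x with
  | zero =>
    simp only [pow_zero]
    exact ⟨fun _ => ⟨_, hx.mul hx.map_conj, (one_mul _).symm⟩, fun _ => ⟨x, hx, (one_mul x).symm⟩⟩
  | succ k ih =>
    refine ⟨fun h => rt2_pow_mul_conj (k + 1) ▸ h.mul_conj, fun ⟨w, hw, hxw⟩ => ?_⟩
    obtain ⟨y, hy, rfl⟩ := zdvd_rt2_of_zdvd_two_mul_conj hx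
      ⟨2 ^ k * w, (two_pow k).mul hw, by rw [hxw]; ring⟩
    have hyw : y * conj y = 2 ^ k * w := by
      apply mul_left_cancel₀ (two_ne_zero : (2 : ℂ) ≠ 0)
      calc 2 * (y * conj y) = rt2 * y * conj (rt2 * y) := by
            rw [map_mul, conj_rt2]; linear_combination (-y * conj y) * rt2_sq
        _ = 2 * (2 ^ k * w) := by rw [hxw]; ring
    obtain ⟨z, hz, rfl⟩ := (ih hy).2 ⟨w, hw, hyw⟩
    exact ⟨z, hz, by ring⟩

/-- For x ∈ Z[ω], gde(x, √2) = gde(|x|², 2). -/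
theorem stmt5 (x : ℂ) (hx : Zomega x) (k : ℕ) :
    IsGde rt2 x k ↔ IsGde 2 (x * (starRingEnd ℂ) x) k := by
  rw [IsGde, IsGde, zdvd_rt2_pow_iff hx, zdvd_rt2_pow_iff hx]
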